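/- Let $w = x_t x_{t-1} \cdots x_1 z$ be a word and $T$ a semistandard tableau of partition shape. Suppose $z > x$ for every letter $x$ appearing in $T$ and for every $x \in \{x_1, \ldots, x_t\}$. For each $k$, let $R_k$ be the row index of the new box when $x_k$ is column-inserted into $[x_{k-1}\cdots x_1 \to T]$, and let $R'_k$ be the row index of the new box when $x_k$ is column-inserted into $[x_{k-1}\cdots x_1 z \to T]$. Then $R_k \geq R'_k$ for all $k$. -/

import Mathlib

namespace DK

/-- `l` is a partition: weakly decreasing list of positive parts. -/
def IsPartition (l : List ℕ) : Prop :=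
  List.Chain' (fun a b => b ≤ a) l ∧ ∀ x ∈ l, 0 < x

/- ## Column insertion, tableaux as lists of columns -/

/-- Insert a letter into a single (strictly increasing) column, returning the
bumped letter (if any) and the new column. -/
def insertCol (a : ℕ) : List ℕ → Option ℕ × List ℕ
  | [] => (none, [a])
  | x :: xs =>
      if a ≤ x then (some x, a :: xs)
      else
        let r := insertCol a xs
        (r.1, x :: r.2)

/-- Column insertion `[a → T]` for a tableau `T` given as its list of columns. -/
def colInsert (a : ℕ) : List (List ℕ) → List (List ℕ)
  | [] => [[a]]
  | c :: cs =>
      match insertCol a c with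
      | (none, c') => c' :: cs
      | (some b, c') => c' :: colInsert b cs

/-- `R(a → T)`: the (1-indexed) row in which the new box appears in `[a → T]`. -/
def newRow (a : ℕ) : List (List ℕ) → ℕ
  | [] => 1
  | c :: cs =>
      match insertCol a c with
      | (none, _) => c.length + 1
      | (some b, _) => newRow b cs

/-- Insert the letters of a word into `T`, the head of the list first (our word
lists are in reading order: the head is the first letter read, which is the
first letter inserted in `[w → T]`). -/
def insertList : List ℕ → List (List ℕ) → List (List ℕ)
  | [], T => T
  | a :: rest, T => insertList rest (colInsert a T)

def sigmaWordAux : List (List ℕ) → List ℕ → List ℕ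
  | _, [] => []
  | T, a :: rest => newRow a T :: sigmaWordAux (colInsert a T) rest

/-- The word `σ(T) = b_N ⋯ b_1` of row indices of the new boxes in the column
insertion of the word `w` into the empty tableau, in the same positional
encoding as `w` itself. -/
def sigmaWord (w : List ℕ) : List ℕ := sigmaWordAux [] w

/-- Iterated insertion of `a 1, a 2, …, a k` into `T`. -/
def insertUpTo (a : ℕ → ℕ) (T : List (List ℕ)) : ℕ → List (List ℕ)
  | 0 => T
  | k+1 => colInsert (a (k+1)) (insertUpTo a T k)

/-- `T` (a list of columns) is a semistandard tableau of partition shape with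
positive entries: columns strictly increasing, column lengths weakly
decreasing, rows weakly increasing. -/
structure IsColTab (T : List (List ℕ)) : Prop where
  ne : ∀ c ∈ T, c ≠ ([] : List ℕ)
  pos : ∀ c ∈ T, ∀ x ∈ c, 0 < x
  colStrict : ∀ c ∈ T, List.Chain' (· < ·) c
  lenDecr : List.Chain' (fun a b => b ≤ a) (T.map List.length)
  rowWeak : ∀ j i, i < (T.getD (j+1) []).length →
      (T.getD j []).getD i 0 ≤ (T.getD (j+1) []).getD i 0

/- ## Charge (Lascoux–Schützenberger) -/

/-- Reading leftwards (cyclically) from position `start` in `w`, the position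
of the first occurrence of the letter `t`. -/
def chooseNext (w : List ℕ) (start t : ℕ) : Option ℕ :=
  let occ := (List.range w.length).filter (fun p => w.getD p 0 = t)
  ((occ.filter (fun p => p < start)).max?) <|> ((occ.filter (fun p => start < p)).max?)

def extractAux (w : List ℕ) : ℕ → ℕ → ℕ → List ℕ
  | 0, _, _ => []
  | fuel+1, start, t =>
      match chooseNext w start t with
      | none => []
      | some p => p :: extractAux w fuel p (t+1)

/-- Positions of the first extracted standard subword of `w`. -/
def extract (w : List ℕ) : List ℕ :=
  extractAux w w.length w.length 1

def chargeIdxAux : ℕ → ℕ → List ℕ → ℕ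
  | _, _, [] => 0
  | idx, prev, p :: ps =>
      let idx' := if p < prev then idx + 1 else idx
      idx' + chargeIdxAux idx' p ps

/-- Charge of a standard subword given by the positions of its letters
`1, 2, …`: the letter `1` has index `0`, and the letter `r+1` has the index of
`r`, increased by one exactly when `r+1` lies to the left of `r`. -/
def chargePos : List ℕ → ℕ
  | [] => 0
  | p :: ps => chargeIdxAux 0 p ps

def removePositions (w : List ℕ) (ps : List ℕ) : List ℕ :=
  ((List.range w.length).filter (fun p => p ∉ ps)).map (fun p => w.getD p 0)

def chargeFuel : ℕ → List ℕ → ℕ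
  | 0, _ => 0
  | fuel+1, w =>
      if w.isEmpty then 0
      else
        let ps := extract w
        chargePos ps + chargeFuel fuel (removePositions w ps)

/-- The charge of a word of partition weight, obtained by repeatedly extracting
standard subwords and summing their charges. -/
def charge (w : List ℕ) : ℕ := chargeFuel w.length w

/-- The word `w` has positive letters and partition weight. -/
def HasPartitionWeight (w : List ℕ) : Prop :=
  (∀ x ∈ w, 0 < x) ∧ ∀ i, 1 ≤ i → w.count (i+1) ≤ w.count i

/- ## Knuth equivalence -/

/-- Elementary Knuth transformations. -/
inductive KnuthStep : List ℕ → List ℕ → Prop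
  | k1 (u v : List ℕ) (x y z : ℕ) (hxy : x ≤ y) (hyz : y < z) :
      KnuthStep (u ++ x :: z :: y :: v) (u ++ z :: x :: y :: v)
  | k2 (u v : List ℕ) (x y z : ℕ) (hxy : x < y) (hyz : y ≤ z) :
      KnuthStep (u ++ y :: z :: x :: v) (u ++ y :: x :: z :: v)

/-- Knuth equivalence: the equivalence relation generated by the elementary
Knuth transformations. -/
def KnuthEquiv : List ℕ → List ℕ → Prop := Relation.EqvGen KnuthStep

/- ## Skew tableaux as functions `ℕ → ℕ → ℕ` (`0` = empty box) -/

/-- `f` is a semistandard skew tableau of shape `lam - rho` (row `i` occupies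
columns `rho_i ≤ j < lam_i`, everything 0-indexed): the support is exactly the
skew shape, rows weakly increase and columns strictly increase. -/
def IsSkewFn (lam rho : List ℕ) (f : ℕ → ℕ → ℕ) : Prop :=
  (∀ i j, f i j ≠ 0 ↔ (rho.getD i 0 ≤ j ∧ j < lam.getD i 0)) ∧
  (∀ i j j', rho.getD i 0 ≤ j → j ≤ j' → j' < lam.getD i 0 → f i j ≤ f i j') ∧
  (∀ i j, f i j ≠ 0 → f (i+1) j ≠ 0 → f i j < f (i+1) j)

/-- The (row-)reading word of `f`, within the bounding box `R × C`: letters are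
read right to left in successive rows, starting with the top row; the head of
the list is the first letter read. -/
def readWordF (R C : ℕ) (f : ℕ → ℕ → ℕ) : List ℕ :=
  ((List.range R).map (fun i =>
    ((List.range C).reverse.map (f i)).filter (fun x => x ≠ 0))).flatten

/-- The word `w` has weight `mu`: the letter `i+1` occurs `mu_i` times. -/
def wtEq (w : List ℕ) (mu : List ℕ) : Prop := ∀ i, w.count (i+1) = mu.getD i 0

/-- `w` is a lattice permutation: in each final segment of the reading
(i.e. each suffix of the list), `i` occurs at least as often as `i+1`. -/
def IsLattice (w : List ℕ) : Prop :=
  ∀ k i, 1 ≤ i → (w.drop k).count (i+1) ≤ (w.drop k).count i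

/- ## Jeu de taquin -/

/-- Update a two-variable function at one point. -/
def upd (f : ℕ → ℕ → ℕ) (i j v : ℕ) : ℕ → ℕ → ℕ :=
  fun i' j' => if i' = i ∧ j' = j then v else f i' j'

/-- One upper jeu de taquin slide: the pawn starts at `(i, j)` and repeatedly
exchanges with the smaller of the letters to its right and below it (the one
below in case of ties), until neither exists.  Returns the resulting tableau
together with the final position of the hole. -/
def slideU : ℕ → (ℕ → ℕ → ℕ) → ℕ → ℕ → ((ℕ → ℕ → ℕ) × ℕ × ℕ)
  | 0, f, i, j => (f, i, j)
  | fuel+1, f, i, j =>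
      let r := f i (j+1)
      let b := f (i+1) j
      if b = 0 ∧ r = 0 then (f, i, j)
      else if b ≠ 0 ∧ (r = 0 ∨ b ≤ r) then
        slideU fuel (upd (upd f i j b) (i+1) j 0) (i+1) j
      else
        slideU fuel (upd (upd f i j r) i (j+1) 0) i (j+1)

/-- One lower jeu de taquin slide: the pawn starts at `(i, j)` and repeatedly
exchanges with the larger of the letters to its left and above it (the one
above in case of ties), until neither exists. -/
def slideL : ℕ → (ℕ → ℕ → ℕ) → ℕ → ℕ → (ℕ → ℕ → ℕ)
  | 0, f, _, _ => f
  | fuel+1, f, i, j =>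
      let l := if j = 0 then 0 else f i (j-1)
      let u := if i = 0 then 0 else f (i-1) j
      if l = 0 ∧ u = 0 then f
      else if u ≠ 0 ∧ (l = 0 ∨ l ≤ u) then
        slideL fuel (upd (upd f i j u) (i-1) j 0) (i-1) j
      else
        slideL fuel (upd (upd f i j l) i (j-1) 0) i (j-1)

/-- Rectification of a skew tableau of shape `lam - rho`: repeatedly slide into
the inner corner at the end of the lowest row with nonzero inner shape,
updating the shape along the way, until the inner shape is empty. -/
def rectify (B : ℕ) : ℕ → List ℕ → List ℕ → (ℕ → ℕ → ℕ) → (ℕ → ℕ → ℕ)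
  | 0, _, _, f => f
  | fuel+1, lam, rho, f =>
      match ((List.range lam.length).filter (fun i => 0 < rho.getD i 0)).max? with
      | none => f
      | some i =>
          let s := slideU B f i (rho.getD i 0 - 1)
          rectify B fuel (lam.set s.2.1 s.2.2) (rho.set i (rho.getD i 0 - 1)) s.1

/-- The jeu de taquin rectification `jdt(T)` of a skew tableau of shape
`lam - rho`. -/
def rect (lam rho : List ℕ) (f : ℕ → ℕ → ℕ) : ℕ → ℕ → ℕ :=
  rectify (lam.length + lam.headD 0 + 1) (rho.sum + 1) lam rho f

/-- The tableau function associated to a list of columns. -/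
def colsToFn (cols : List (List ℕ)) : ℕ → ℕ → ℕ :=
  fun i j => (cols.getD j []).getD i 0


/- ## Polynomial / fermionic machinery -/

/-- The Gaussian binomial coefficient `[p+m choose m]_t` as a polynomial,
defined by the `q`-Pascal recurrence. -/
noncomputable def gauss : ℕ → ℕ → Polynomial ℤ
  | _, 0 => 1
  | 0, _ + 1 => 1
  | p + 1, m + 1 => gauss p (m + 1) + Polynomial.X ^ (p + 1) * gauss (p + 1) m
  termination_by p m => p + m

/-- `n(μ) = Σ_i (i-1) μ_i`. -/
def nstat (mu : List ℕ) : ℕ := ∑ i ∈ Finset.range mu.length, i * mu.getD i 0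

/-- `Q_i(λ) = Σ_j min(i, λ_j)`. -/
def Qi (i : ℕ) (l : List ℕ) : ℤ := ((l.map (fun x => min i x)).sum : ℤ)

/-- `Σ_{i,j} min(i,j) m_i(λ) m_j(κ)`, computed as `Σ_{x ∈ λ, y ∈ κ} min(x,y)`. -/
def pairMin (l k : List ℕ) : ℤ :=
  ((l.map (fun x => (k.map (fun y => min x y)).sum)).sum : ℤ)

/-- Vacancy numbers `p_i^{(a)}` of a configuration `nu` (where `nu 0 = μ` is
the multiplicity data and `nu a = []` for `a ≥ n`). -/
def pVac (nu : ℕ → List ℕ) (a i : ℕ) : ℤ :=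
  Qi i (nu (a-1)) - 2 * Qi i (nu a) + Qi i (nu (a+1))

/-- Admissible `L(μ)`-configurations of weight `lam` in type `A_{n-1}`. -/
def AdmConf (n : ℕ) (mu lam : List ℕ) : Set (ℕ → List ℕ) :=
  {nu | (∀ a, IsPartition (nu a)) ∧ nu 0 = mu ∧ (∀ a, n ≤ a → nu a = []) ∧
    (∀ a, 1 ≤ a → a ≤ n - 1 → (nu a).sum = (lam.drop a).sum) ∧
    (∀ a i, 1 ≤ a → a ≤ n - 1 → 1 ≤ i → 0 ≤ pVac nu a i)}

/-- The cocharge `cc(ν) = ½ Σ_{a,b∈I₀} (α_a,α_b) Σ_{i,j} min(i,j) m_i^{(a)} m_j^{(b)}`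
of a configuration, written without the factor `½` by collecting the diagonal
terms (`(α_a,α_a) = 2`) and the adjacent terms (`(α_a,α_{a±1}) = -1`). -/
def ccConf (n : ℕ) (nu : ℕ → List ℕ) : ℤ :=
  (∑ a ∈ Finset.Icc 1 (n-1), pairMin (nu a) (nu a)) -
  (∑ a ∈ Finset.Icc 1 (n-2), pairMin (nu a) (nu (a+1)))

/-- The set of semistandard tableaux of straight shape `lam` and weight `mu`,
as functions. -/
def TabSet (lam mu : List ℕ) : Set (ℕ → ℕ → ℕ) :=
  {f | IsSkewFn lam [] f ∧ wtEq (readWordF lam.length (lam.headD 0) f) mu}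

/-- The Kostka polynomial `K_{λ,μ}(t)`, via the Lascoux–Schützenberger charge
formula `K_{λ,μ}(t) = Σ_{T ∈ Tab(λ,μ)} t^{c(T)}`. -/
noncomputable def kostka (lam mu : List ℕ) : Polynomial ℤ :=
  ∑ᶠ f ∈ TabSet lam mu,
    (Polynomial.X : Polynomial ℤ) ^ charge (readWordF lam.length (lam.headD 0) f)

/-- The Littlewood–Richardson coefficient `c^ν_{λ',λ''}`: the number of
semistandard skew tableaux of shape `ν - λ'` and weight `λ''` whose reading
word is a lattice permutation. -/
noncomputable def lrCoeff (l' l'' nu : List ℕ) : ℕ :=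
  {f : ℕ → ℕ → ℕ | IsSkewFn nu l' f ∧
    IsLattice (readWordF nu.length (nu.headD 0) f) ∧
    wtEq (readWordF nu.length (nu.headD 0) f) l''}.ncard

/-- The fermionic formula `M(μ, λ; t)` of type `A_{n-1}`, as a Laurent
polynomial: the sum over admissible configurations of
`t^{cc(ν)} Π_{(a,i)} [p_i^{(a)} + m_i^{(a)}, m_i^{(a)}]_t`. -/
noncomputable def fermionicM (n : ℕ) (mu lam : List ℕ) : LaurentPolynomial ℤ :=
  ∑ᶠ nu ∈ AdmConf n mu lam,
    LaurentPolynomial.T (ccConf n nu) *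
      ∏ᶠ a ∈ Set.Icc 1 (n-1), ∏ᶠ i ∈ {i : ℕ | 1 ≤ i},
        Polynomial.toLaurent (gauss ((pVac nu a i).toNat) ((nu a).count i))

/- ## Rigged configurations (with riggings as multisets of strings) -/

/-- `Q_i` for a multiset of parts. -/
def QiM (i : ℕ) (s : Multiset ℕ) : ℤ := ((s.map (fun x => min i x)).sum : ℤ)

/-- The underlying configuration of a rigged configuration: `ν^{(0)} = μ`, and
`ν^{(a)}` is the multiset of string lengths of `RC a` for `a ≥ 1`. -/
def nuOf (mu : List ℕ) (RC : ℕ → Multiset (ℕ × ℤ)) (a : ℕ) : Multiset ℕ :=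
  if a = 0 then (mu : Multiset ℕ) else (RC a).map Prod.fst

/-- Vacancy numbers of a rigged configuration. -/
def pRC (mu : List ℕ) (RC : ℕ → Multiset (ℕ × ℤ)) (a i : ℕ) : ℤ :=
  QiM i (nuOf mu RC (a-1)) - 2 * QiM i (nuOf mu RC a) + QiM i (nuOf mu RC (a+1))

/-- Basic validity of a rigged configuration in type `A_{n-1}`: nothing outside
`1 ≤ a ≤ n-1`, and all string lengths are positive. -/
def RCvalid (n : ℕ) (RC : ℕ → Multiset (ℕ × ℤ)) : Prop :=
  RC 0 = 0 ∧ (∀ a, n ≤ a → RC a = 0) ∧ ∀ a s, s ∈ RC a → 1 ≤ s.1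

end DK

/-!
Since `z` exceeds every letter ever inserted, `[x_m ⋯ x_1 z → T]` is always
`[x_m ⋯ x_1 → T]` with one extra box `z` at the bottom of some column (`ColumnExtension`).
A letter `a < z` then follows the same bumping route in both tableaux until it reaches the
column of `z`. If it bumps a letter above `z`, nothing changes; if it would have been placed at
the bottom of that column, it takes the place of `z` instead, and `z` moves to the bottom of
the next column. That column is not longer, since column insertion preserves the tableau
property (`IsTab.colInsert`), so the new box lies in a weakly higher row, and `z` again sits at
the bottom of a column.
-/

namespace DK

theorem isChain_lt_iff_getD {c : List ℕ} :
    c.IsChain (· < ·) ↔ ∀ i j, i < j → j < c.length → c.getD i 0 < c.getD j 0 := by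
  rw [List.isChain_iff_pairwise, List.pairwise_iff_getElem]
  refine ⟨fun h i j hij hj => ?_, fun h i j hi hj hij => ?_⟩
  · rw [List.getD_eq_getElem _ _ (hij.trans hj), List.getD_eq_getElem _ _ hj]
    exact h i j _ hj hij
  · rw [← List.getD_eq_getElem _ 0 hi, ← List.getD_eq_getElem _ 0 hj]
    exact h i j hij hj

theorem getD_set_of_lt {c : List ℕ} {r i : ℕ} (v : ℕ) (hr : r < c.length) :
    (c.set r v).getD i 0 = if r = i then v else c.getD i 0 := by
  simp only [List.getD_eq_getElem?_getD, List.getElem?_set]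
  split_ifs <;> simp_all

section insertCol

variable {a : ℕ}

theorem insertCol_of_forall_lt : ∀ {c : List ℕ}, (∀ x ∈ c, x < a) →
    insertCol a c = (none, c ++ [a])
  | [], _ => rfl
  | x :: xs, h => by
    have hx : ¬ a ≤ x := Nat.not_le.2 (h x List.mem_cons_self)
    simp [insertCol, hx, insertCol_of_forall_lt fun y hy => h y (List.mem_cons_of_mem _ hy)]

theorem insertCol_eq_none : ∀ {c d : List ℕ}, insertCol a c = (none, d) →
    d = c ++ [a] ∧ ∀ x ∈ c, x < a
  | [], d, h => by simp_all [insertCol]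
  | x :: xs, d, h => by
    by_cases hx : a ≤ x
    · simp [insertCol, hx] at h
    · simp only [insertCol, if_neg hx, Prod.mk.injEq] at h
      obtain ⟨hd, hlt⟩ := insertCol_eq_none (c := xs) (Prod.ext h.1 rfl)
      refine ⟨by simp [← h.2, hd], fun y hy => ?_⟩
      rcases List.mem_cons.1 hy with rfl | hy
      exacts [Nat.lt_of_not_le hx, hlt y hy]

theorem insertCol_eq_some : ∀ {c d : List ℕ} {b : ℕ}, insertCol a c = (some b, d) →
    ∃ r < c.length, b = c.getD r 0 ∧ d = c.set r a ∧ (∀ i < r, c.getD i 0 < a) ∧ a ≤ b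
  | [], _, _, h => by simp [insertCol] at h
  | x :: xs, d, b, h => by
    by_cases hx : a ≤ x
    · simp only [insertCol, if_pos hx, Prod.mk.injEq, Option.some.injEq] at h
      obtain ⟨rfl, rfl⟩ := h
      exact ⟨0, by simp, by simp, by simp, by omega, hx⟩
    · simp only [insertCol, if_neg hx, Prod.mk.injEq] at h
      obtain ⟨r, hr, hb, hd, hlow, hab⟩ := insertCol_eq_some (c := xs) (Prod.ext h.1 rfl)
      refine ⟨r + 1, by simpa using hr, by simpa using hb, by simp [← h.2, hd], ?_, hab⟩
      rintro (_ | i) hi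
      exacts [Nat.lt_of_not_le hx, by simpa using hlow i (by omega)]

theorem mem_of_insertCol_eq_some {c d : List ℕ} {b : ℕ} (h : insertCol a c = (some b, d)) :
    b ∈ c := by
  obtain ⟨r, hr, rfl, -⟩ := insertCol_eq_some h
  rw [List.getD_eq_getElem _ _ hr]
  exact List.getElem_mem hr

theorem mem_of_mem_insertCol_snd {c : List ℕ} {v : ℕ} (hv : v ∈ (insertCol a c).2) :
    v = a ∨ v ∈ c := by
  rcases hic : insertCol a c with ⟨_ | b, d⟩ <;> rw [hic] at hv
  · obtain ⟨rfl, -⟩ := insertCol_eq_none hic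
    simpa [or_comm] using hv
  · obtain ⟨r, -, -, rfl, -⟩ := insertCol_eq_some hic
    exact (List.mem_or_eq_of_mem_set hv).symm

theorem insertCol_append_of_eq_none {z : ℕ} (haz : a ≤ z) : ∀ {c d : List ℕ},
    insertCol a c = (none, d) → insertCol a (c ++ [z]) = (some z, d)
  | [], d, h => by simp_all [insertCol]
  | x :: xs, d, h => by
    by_cases hx : a ≤ x
    · simp [insertCol, hx] at h
    · simp only [insertCol, if_neg hx, Prod.mk.injEq, List.cons_append] at h ⊢
      rw [insertCol_append_of_eq_none haz (Prod.ext h.1 rfl)]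
      exact ⟨rfl, h.2⟩

theorem insertCol_append_of_eq_some {z b : ℕ} : ∀ {c d : List ℕ},
    insertCol a c = (some b, d) → insertCol a (c ++ [z]) = (some b, d ++ [z])
  | [], _, h => by simp [insertCol] at h
  | x :: xs, d, h => by
    by_cases hx : a ≤ x
    · simp only [insertCol, if_pos hx, Prod.mk.injEq, Option.some.injEq] at h
      simp [insertCol, hx, ← h.1, ← h.2]
    · simp only [insertCol, if_neg hx, Prod.mk.injEq, List.cons_append] at h ⊢
      rw [insertCol_append_of_eq_some (Prod.ext h.1 rfl), ← h.2]
      exact ⟨rfl, rfl⟩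

end insertCol

theorem mem_of_mem_flatten_colInsert {a v : ℕ} : ∀ {S : List (List ℕ)},
    v ∈ (colInsert a S).flatten → v = a ∨ v ∈ S.flatten
  | [], h => by simpa [colInsert] using h
  | c :: cs, h => by
    rcases hic : insertCol a c with ⟨_ | b, d⟩
    all_goals
      simp only [colInsert, hic, List.flatten_cons, List.mem_append] at h ⊢
      rcases h with h | h
      · exact (mem_of_mem_insertCol_snd (c := c) (by rw [hic]; exact h)).imp_right Or.inl
    · exact Or.inr (Or.inr h)
    · rcases mem_of_mem_flatten_colInsert h with rfl | h
      · exact Or.inr (Or.inl (mem_of_insertCol_eq_some hic))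
      · exact Or.inr (Or.inr h)

def ColLE (p c : List ℕ) : Prop :=
  c.length ≤ p.length ∧ ∀ i < c.length, p.getD i 0 ≤ c.getD i 0

/-- A weakening of `IsColTab`, in the form that follows the recursion of `colInsert`. -/
def IsTab : List (List ℕ) → Prop
  | [] => True
  | c :: cs => c.IsChain (· < ·) ∧ ColLE c (cs.headD []) ∧ IsTab cs

theorem IsColTab.tail {c : List ℕ} {cs : List (List ℕ)} (h : IsColTab (c :: cs)) :
    IsColTab cs where
  ne d hd := h.ne d (List.mem_cons_of_mem _ hd)
  pos d hd := h.pos d (List.mem_cons_of_mem _ hd)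
  colStrict d hd := h.colStrict d (List.mem_cons_of_mem _ hd)
  lenDecr := h.lenDecr.tail
  rowWeak j i hi := by simpa using h.rowWeak (j + 1) i (by simpa using hi)

theorem IsColTab.isTab : ∀ {T : List (List ℕ)}, IsColTab T → IsTab T
  | [], _ => trivial
  | c :: cs, h => by
    refine ⟨h.colStrict c List.mem_cons_self, ?_, h.tail.isTab⟩
    cases cs with
    | nil => exact ⟨Nat.zero_le _, by simp⟩
    | cons d rest =>
      exact ⟨by simpa using (List.isChain_cons_cons.1 h.lenDecr).1,
        fun i hi => by simpa using h.rowWeak 0 i (by simpa using hi)⟩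

theorem isChain_insertCol {a : ℕ} {c : List ℕ} (h : c.IsChain (· < ·)) :
    (insertCol a c).2.IsChain (· < ·) := by
  rcases hic : insertCol a c with ⟨_ | b, d⟩
  · obtain ⟨rfl, hlt⟩ := insertCol_eq_none hic
    refine List.isChain_append.2 ⟨h, List.isChain_singleton _, fun x hx y hy => ?_⟩
    simp only [List.head?_cons, Option.mem_def, Option.some.injEq] at hy
    exact hy ▸ hlt x (List.mem_of_getLast? hx)
  · obtain ⟨r, hr, rfl, rfl, hlow, hab⟩ := insertCol_eq_some hic
    rw [isChain_lt_iff_getD] at h ⊢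
    intro i j hij hj
    rw [List.length_set] at hj
    rw [getD_set_of_lt a hr, getD_set_of_lt a hr]
    split_ifs with hri hrj hrj
    · omega
    · subst hri; exact hab.trans_lt (h _ j hij hj)
    · subst hrj; exact hlow i hij
    · exact h i j hij hj

theorem ColLE.insertCol_left {a : ℕ} {c d : List ℕ} (h : ColLE c d) :
    ColLE (insertCol a c).2 d := by
  rcases hic : insertCol a c with ⟨_ | b, c'⟩
  · obtain ⟨rfl, -⟩ := insertCol_eq_none hic
    refine ⟨by simpa using h.1.trans (Nat.le_succ _), fun i hi => ?_⟩
    rw [List.getD_append _ _ _ _ (hi.trans_le h.1)]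
    exact h.2 i hi
  · obtain ⟨r, hr, rfl, rfl, -, hab⟩ := insertCol_eq_some hic
    refine ⟨by simpa using h.1, fun i hi => ?_⟩
    rw [getD_set_of_lt a hr]
    split_ifs with hri
    · subst hri; exact hab.trans (h.2 _ hi)
    · exact h.2 i hi

/-- A letter `b` bumped out of row `r` of `p` lands in a row `≤ r` of the next column `c`. -/
theorem ColLE.insertCol_right {p c : List ℕ} {r b : ℕ} (hp : p.IsChain (· < ·))
    (hr : r < p.length) (hpb : p.getD r 0 ≤ b) (hbc : r < c.length → b ≤ c.getD r 0)
    (h : ColLE p c) : ColLE p (insertCol b c).2 := by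
  have hmono : ∀ i ≤ r, p.getD i 0 ≤ b := fun i hi =>
    (hi.lt_or_eq.elim (fun hi => (isChain_lt_iff_getD.1 hp i r hi hr).le) (· ▸ le_rfl)).trans hpb
  rcases hic : insertCol b c with ⟨_ | b', c'⟩
  · obtain ⟨rfl, hlt⟩ := insertCol_eq_none hic
    have hcr : c.length ≤ r := by
      by_contra! hrc
      have := hlt _ (List.getElem_mem hrc)
      have := hbc hrc
      rw [List.getD_eq_getElem _ _ hrc] at this
      omega
    refine ⟨by simp; omega, fun i hi => ?_⟩
    rcases (Nat.lt_succ_iff.1 (by simpa using hi)).lt_or_eq with hi | rfl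
    · rw [List.getD_append _ _ _ _ hi]; exact h.2 i hi
    · simpa using hmono _ hcr
  · obtain ⟨r', hr', rfl, rfl, hlow, -⟩ := insertCol_eq_some hic
    have hrr : r' ≤ r := by
      by_contra! hrr
      have := hlow r hrr
      have := hbc (hrr.trans hr')
      omega
    refine ⟨by simpa using h.1, fun i hi => ?_⟩
    rw [getD_set_of_lt b hr']
    split_ifs with hri
    · exact hri ▸ hmono r' hrr
    · exact h.2 i (by simpa using hi)

theorem headD_colInsert (b : ℕ) (S : List (List ℕ)) :
    (colInsert b S).headD [] = (insertCol b (S.headD [])).2 := by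
  cases S with
  | nil => rfl
  | cons c cs =>
    rcases hic : insertCol b c with ⟨_ | b', c'⟩ <;> simp [colInsert, hic]

theorem IsTab.colInsert {a : ℕ} : ∀ {S : List (List ℕ)}, IsTab S → IsTab (colInsert a S)
  | [], _ => ⟨List.isChain_singleton _, ⟨by simp, by simp⟩, trivial⟩
  | c :: cs, ⟨hc, hcd, hcs⟩ => by
    have hc' := isChain_insertCol (a := a) hc
    have hcd' := hcd.insertCol_left (a := a)
    rcases hic : insertCol a c with ⟨_ | b, c'⟩
    · simp only [DK.colInsert, hic] at hc' hcd' ⊢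
      exact ⟨hc', hcd', hcs⟩
    · simp only [DK.colInsert, hic] at hc' hcd' ⊢
      obtain ⟨r, hr, rfl, rfl, -, hab⟩ := insertCol_eq_some hic
      refine ⟨hc', ?_, hcs.colInsert⟩
      rw [headD_colInsert]
      exact hcd'.insertCol_right hc' (by simpa using hr)
        (by rwa [getD_set_of_lt a hr, if_pos rfl]) (hcd.2 r)

inductive ColumnExtension (z : ℕ) : List (List ℕ) → List (List ℕ) → Prop
  | nil : ColumnExtension z [] [[z]]
  | here (c : List ℕ) (cs : List (List ℕ)) : ColumnExtension z (c :: cs) ((c ++ [z]) :: cs)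
  | cons (c : List ℕ) {cs cs' : List (List ℕ)} :
      ColumnExtension z cs cs' → ColumnExtension z (c :: cs) (c :: cs')

section ColumnExtension

variable {z : ℕ}

theorem columnExtension_colInsert_of_forall_lt {S : List (List ℕ)}
    (hS : ∀ v ∈ S.flatten, v < z) :
    ColumnExtension z S (colInsert z S) := by
  cases S with
  | nil => exact .nil
  | cons c cs =>
    rw [colInsert, insertCol_of_forall_lt fun v hv => hS v (List.mem_append_left _ hv)]
    exact .here c cs

theorem newRow_of_forall_lt {S : List (List ℕ)} (hS : ∀ v ∈ S.flatten, v < z) :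
    newRow z S = (S.headD []).length + 1 := by
  cases S with
  | nil => rfl
  | cons c cs => rw [newRow, insertCol_of_forall_lt fun v hv => hS v (List.mem_append_left _ hv)]; rfl

theorem ColumnExtension.colInsert {S S' : List (List ℕ)} {a : ℕ}
    (h : ColumnExtension z S S') (ha : a < z) (hS : ∀ v ∈ S.flatten, v < z) :
    ColumnExtension z (colInsert a S) (colInsert a S') := by
  induction h generalizing a with
  | nil =>
    simp only [DK.colInsert, insertCol, if_pos ha.le]
    exact .cons _ .nil
  | here c cs =>
    rcases hic : insertCol a c with ⟨_ | b, d⟩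
    · simp only [DK.colInsert, hic, insertCol_append_of_eq_none ha.le hic]
      exact .cons _ (columnExtension_colInsert_of_forall_lt fun v hv =>
        hS v (List.mem_append_right c hv))
    · simp only [DK.colInsert, hic, insertCol_append_of_eq_some hic]
      exact .here d _
  | cons c h ih =>
    rcases hic : insertCol a c with ⟨_ | b, d⟩
    · simp only [DK.colInsert, hic]
      exact .cons d h
    · simp only [DK.colInsert, hic]
      exact .cons d (ih (hS b (List.mem_append_left _ (mem_of_insertCol_eq_some hic)))
        fun v hv => hS v (List.mem_append_right c hv))

theorem ColumnExtension.newRow_le {S S' : List (List ℕ)} {a : ℕ}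
    (h : ColumnExtension z S S') (ha : a < z) (hS : ∀ v ∈ S.flatten, v < z) (hT : IsTab S) :
    newRow a S' ≤ newRow a S := by
  induction h generalizing a with
  | nil => simp [newRow, insertCol, ha.le]
  | here c cs =>
    rcases hic : insertCol a c with ⟨_ | b, d⟩
    · simp only [newRow, hic, insertCol_append_of_eq_none ha.le hic]
      rw [newRow_of_forall_lt fun v hv => hS v (List.mem_append_right c hv)]
      exact Nat.succ_le_succ hT.2.1.1
    · simp only [newRow, hic, insertCol_append_of_eq_some hic, le_rfl]
  | cons c h ih =>
    rcases hic : insertCol a c with ⟨_ | b, d⟩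
    · simp only [newRow, hic, le_rfl]
    · simp only [newRow, hic]
      exact ih (hS b (List.mem_append_left _ (mem_of_insertCol_eq_some hic)))
        (fun v hv => hS v (List.mem_append_right c hv)) hT.2.2

end ColumnExtension

end DK

theorem insert_big_letter_first_general (t : ℕ) (x : ℕ → ℕ) (z : ℕ)
    (T : List (List ℕ)) (hT : DK.IsColTab T)
    (hzT : ∀ c ∈ T, ∀ v ∈ c, v < z)
    (hzx : ∀ k, 1 ≤ k → k ≤ t → x k < z) :
    ∀ k, 1 ≤ k → k ≤ t →
      DK.newRow (x k) (DK.insertUpTo x (DK.colInsert z T) (k - 1)) ≤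
        DK.newRow (x k) (DK.insertUpTo x T (k - 1)) := by
  have invariant : ∀ m ≤ t, DK.IsTab (DK.insertUpTo x T m) ∧
      (∀ v ∈ (DK.insertUpTo x T m).flatten, v < z) ∧
      DK.ColumnExtension z (DK.insertUpTo x T m) (DK.insertUpTo x (DK.colInsert z T) m) := by
    intro m hm
    induction m with
    | zero =>
      have hzT' : ∀ v ∈ T.flatten, v < z := fun v hv =>
        let ⟨c, hc, hv⟩ := List.mem_flatten.1 hv; hzT c hc v hv
      exact ⟨hT.isTab, hzT', DK.columnExtension_colInsert_of_forall_lt hzT'⟩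
    | succ m ih =>
      obtain ⟨htab, hlt, hext⟩ := ih (by omega)
      have hx := hzx (m + 1) (by omega) hm
      refine ⟨htab.colInsert, fun v hv => ?_, hext.colInsert hx hlt⟩
      rcases DK.mem_of_mem_flatten_colInsert hv with rfl | hv
      exacts [hx, hlt v hv]
  intro k hk1 hkt
  obtain ⟨htab, hlt, hext⟩ := invariant (k - 1) (by omega)
  exact hext.newRow_le (hzx k hk1 hkt) hlt htab

/-- Lemma 1.2.3: if `z` is strictly larger than every letter of `T` and every
`x_k`, then inserting `z` first can only weakly decrease the row indices of
the new boxes created by the subsequent insertions of `x_1, …, x_t`. -/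
theorem insert_big_letter_first (t : ℕ) (x : ℕ → ℕ) (z : ℕ)
    (T : List (List ℕ)) (hT : DK.IsColTab T)
    (hpos : ∀ k, 1 ≤ k → k ≤ t → 0 < x k)
    (hzT : ∀ c ∈ T, ∀ v ∈ c, v < z)
    (hzx : ∀ k, 1 ≤ k → k ≤ t → x k < z) :
    ∀ k, 1 ≤ k → k ≤ t →
      DK.newRow (x k) (DK.insertUpTo x (DK.colInsert z T) (k - 1)) ≤
        DK.newRow (x k) (DK.insertUpTo x T (k - 1)) :=
  insert_big_letter_first_general t x z T hT hzT hzx
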